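/- Let π and π** be partitions such that the Young diagram of π is contained in that of π** and the skew shape π**∖π is a border strip of length ℓ, i.e., it consists of ℓ cells, is edgewise connected, and contains no 2×2 square of cells. Let (x,y) be the head of the strip, i.e., its cell with the largest column index (rows and columns indexed from 1, row x, column y). Then srank(π**) ≡ srank(π) + 2ℓ(x + y) + ℓ² − ℓ (mod 4). -/

import Mathlib

/-!
Counting column by column, `srank π = ∑ ((-1)^(j+1) - (-1)^(i+1))` over the cells `(i, j)` of
the Young diagram, and each summand is `≡ 2 (j - i) (mod 4)`; so modulo `4` the srank is twice
the sum of the contents `j - i`, and attaching a strip adds twice the sum of its contents.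
Without a 2×2 square a skew shape meets every diagonal at most once, and if it is connected its
contents form an interval. For a border strip of length `ℓ` whose head has the largest content
`y - x` they are `y - x - ℓ + 1, …, y - x`, with doubled sum
`2ℓ(y - x) - ℓ² + ℓ ≡ 2ℓ(x + y) + ℓ² - ℓ (mod 4)`.
-/

open scoped Classical

noncomputable section

namespace BGG

/-- The number of odd parts of a partition (given as a multiset of parts). -/
def oddParts (M : Multiset ℕ) : ℕ := (M.filter (fun p => Odd p)).card

/-- The `j`-th part of the conjugate partition: the number of parts that are `≥ j`. -/
def conjCount (M : Multiset ℕ) (j : ℕ) : ℕ := (M.filter (fun p => j ≤ p)).card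

/-- The number of odd parts of the conjugate partition. -/
def oddConjParts (M : Multiset ℕ) : ℕ :=
  ((Finset.Icc 1 M.sum).filter (fun j => Odd (conjCount M j))).card

/-- Stanley's srank: the number of odd parts minus the number of odd parts of the conjugate. -/
def srank (M : Multiset ℕ) : ℤ := (oddParts M : ℤ) - (oddConjParts M : ℤ)

/-- The `x`-th part `λ_x` (for `x ≥ 1`) of the partition with parts `M`. -/
def rowLen (M : Multiset ℕ) (x : ℕ) : ℕ :=
  ((Finset.Icc 1 M.sum).filter (fun j => x ≤ conjCount M j)).card

/-- The cell in row `x`, column `y` (both indexed from 1) lies in the Young diagram. -/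
def CellMem (M : Multiset ℕ) (x y : ℕ) : Prop := 1 ≤ x ∧ 1 ≤ y ∧ x ≤ conjCount M y

/-- A partition is a `t`-core if no cell of its Young diagram has hook length divisible
by `t`. -/
def IsTCore (t : ℕ) (M : Multiset ℕ) : Prop :=
  ∀ x y : ℕ, CellMem M x y → ¬ (t ∣ ((rowLen M x - y) + (conjCount M y - x) + 1))

/-- `rLabel t M i` is the number of cells of the Young diagram labelled `i`, where the cell in
row `x` and column `y` is labelled `(y - x) mod t`. -/
def rLabel (t : ℕ) (M : Multiset ℕ) (i : ℕ) : ℕ :=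
  (((Finset.Icc 1 M.card) ×ˢ (Finset.Icc 1 M.sum)).filter
    (fun c => CellMem M c.1 c.2 ∧ ((c.2 : ℤ) - (c.1 : ℤ)) % (t : ℤ) = (i : ℤ))).card

/-- `nvec t M i = r_i - r_{(i+1) mod t}`. -/
def nvec (t : ℕ) (M : Multiset ℕ) (i : ℕ) : ℤ :=
  (rLabel t M i : ℤ) - (rLabel t M ((i + 1) % t) : ℤ)

/-- The set of beta-numbers `β_j = λ_j + ν - j`, `1 ≤ j ≤ ν`, where `ν = t * (number of parts)`
is a multiple of `t` that is at least the number of parts. -/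
def betaSet (t : ℕ) (M : Multiset ℕ) : Finset ℕ :=
  (Finset.Icc 1 (t * M.card)).image (fun j => rowLen M j + t * M.card - j)

/-- The `i`-th component `π̂_i` of the `t`-quotient of a partition: if the beta-numbers
congruent to `i` mod `t` are `t c₁ + i > t c₂ + i > ⋯ > t c_s + i` then `π̂_i` has parts
`c_k - (s - k)` (zeros discarded). -/
def tQuotient (t : ℕ) (M : Multiset ℕ) (i : ℕ) : Multiset ℕ :=
  Multiset.filter (fun p => 0 < p)
    (((betaSet t M).filter (fun e => e % t = i)).val.map
      (fun e => (e - i) / t - ((betaSet t M).filter (fun e' => e' % t = i ∧ e' < e)).card))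

/-- The 2-quotient-rank: the number of parts of `π̂₀` minus the number of parts of `π̂₁`. -/
def tqrank (M : Multiset ℕ) : ℤ :=
  ((tQuotient 2 M 0).card : ℤ) - ((tQuotient 2 M 1).card : ℤ)

/-- The Andrews-Garvan crank. -/
def crank (M : Multiset ℕ) : ℤ :=
  if M.count 1 = 0 then (M.sup : ℤ)
  else ((M.filter (fun p => M.count 1 < p)).card : ℤ) - (M.count 1 : ℤ)

/-- `pi1 M` is the partition with `⌊f_{2i}/2⌋` parts equal to `i` for each `i ≥ 1`, where
`f_j` is the number of parts of `M` equal to `j`. -/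
def pi1 (M : Multiset ℕ) : Multiset ℕ :=
  (Finset.Icc 1 M.sum).val.bind (fun i => Multiset.replicate (M.count (2 * i) / 2) i)

/-- Partitions of type B. -/
def TypeB (M : Multiset ℕ) : Prop :=
  M = ({3, 1} : Multiset ℕ) ∨
    (M.sum ≠ 4 ∧ rowLen M 2 + 2 ≤ rowLen M 1 ∧ conjCount M 2 + 2 ≤ conjCount M 1 ∧
      ¬ ((rowLen M 1 : ℤ) - 2 = (rowLen M 2 : ℤ) ∧ Even (rowLen M 2)) ∧
      ∀ p : ℕ, Even p → M.count p ≤ 1)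

/-- The St-crank: `crank(π₁) + srank(π)/2 + Ψ(π)`, where `Ψ(π) = 1` iff `π` is of type B. -/
noncomputable def stcrank (M : Multiset ℕ) : ℤ :=
  crank (pi1 M) + srank M / 2 + (if TypeB M then 1 else 0)

/-- The BG-rank: the alternating sum of parities of the parts, listed in nonincreasing order. -/
def bgRank (M : Multiset ℕ) : ℤ :=
  ∑ j ∈ Finset.range M.card,
    (-1 : ℤ) ^ j * (if Odd (((M.sort (· ≤ ·)).reverse).getD j 0) then 1 else 0)

/-- The residue mod 5 of the 5-core-crank of a partition of a number `≡ 4 (mod 5)`. -/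
def c5 (M : Multiset ℕ) : ℤ :=
  2 + 2 * (rLabel 5 M 0 : ℤ) + (rLabel 5 M 1 : ℤ) - (rLabel 5 M 3 : ℤ) - 2 * (rLabel 5 M 4 : ℤ)

/-- `Strip Mbig Msmall c` : the cell `c` lies in the skew shape (diagram of the big
partition minus diagram of the small one). -/
def Strip (Mbig Msmall : Multiset ℕ) (c : ℕ × ℕ) : Prop :=
  CellMem Mbig c.1 c.2 ∧ ¬ CellMem Msmall c.1 c.2

/-- Two cells are edgewise adjacent. -/
def Adj (c d : ℕ × ℕ) : Prop :=
  (c.1 = d.1 ∧ (c.2 + 1 = d.2 ∨ d.2 + 1 = c.2)) ∨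
  (c.2 = d.2 ∧ (c.1 + 1 = d.1 ∨ d.1 + 1 = c.1))

open Finset

lemma sum_Icc_neg_one_pow_succ (m : ℕ) :
    ∑ i ∈ Icc 1 m, (-1 : ℤ) ^ (i + 1) = ((m % 2 : ℕ) : ℤ) := by
  induction m with
  | zero => simp
  | succ m ih =>
    rw [sum_Icc_succ_top (by omega), ih, neg_one_pow_eq_ite]
    split_ifs with h <;> rw [Nat.even_iff] at h <;> omega

lemma conjCount_cons (a : ℕ) (M : Multiset ℕ) (j : ℕ) :
    conjCount (a ::ₘ M) j = conjCount M j + if j ≤ a then 1 else 0 := by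
  by_cases h : j ≤ a <;> simp [conjCount, h]

lemma sum_conjCount_smul {R : Type*} [AddCommMonoid R] {N : ℕ} {M : Multiset ℕ}
    (hN : ∀ p ∈ M, p ≤ N) (g : ℕ → R) :
    ∑ j ∈ Icc 1 N, conjCount M j • g j = (M.map fun p => ∑ j ∈ Icc 1 p, g j).sum := by
  induction M using Multiset.induction with
  | empty => simp [conjCount]
  | cons a M ih =>
    have hIcc : (Icc 1 N).filter (· ≤ a) = Icc 1 a := by
      ext j; simp only [mem_filter, mem_Icc]; have := hN a (by simp); omega
    simp only [conjCount_cons, add_smul, sum_add_distrib, Multiset.map_cons, Multiset.sum_cons,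
      ih fun p hp => hN p (Multiset.mem_cons_of_mem hp)]
    rw [add_comm]
    congr 1
    simp [ite_smul, ← sum_filter, hIcc]

def cells (M : Multiset ℕ) : Finset (ℕ × ℕ) :=
  (Icc 1 M.sum).biUnion fun j => Icc 1 (conjCount M j) ×ˢ {j}

lemma le_sum_of_one_le_conjCount {M : Multiset ℕ} {j : ℕ} (h : 1 ≤ conjCount M j) :
    j ≤ M.sum := by
  obtain ⟨p, hp⟩ := Multiset.card_pos_iff_exists_mem.mp h
  rw [Multiset.mem_filter] at hp
  exact hp.2.trans (Multiset.le_sum_of_mem hp.1)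

lemma mem_cells {M : Multiset ℕ} {c : ℕ × ℕ} : c ∈ cells M ↔ CellMem M c.1 c.2 := by
  obtain ⟨i, j⟩ := c
  simp only [cells, mem_biUnion, mem_product, mem_Icc, mem_singleton, CellMem]
  constructor
  · rintro ⟨j, hj, hi, rfl⟩
    exact ⟨hi.1, hj.1, hi.2⟩
  · rintro ⟨hi, hj, hij⟩
    exact ⟨j, ⟨hj, le_sum_of_one_le_conjCount (hi.trans hij)⟩, ⟨hi, hij⟩, rfl⟩

lemma sum_cells {R : Type*} [AddCommMonoid R] (M : Multiset ℕ) (f : ℕ × ℕ → R) :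
    ∑ c ∈ cells M, f c = ∑ j ∈ Icc 1 M.sum, ∑ i ∈ Icc 1 (conjCount M j), f (i, j) := by
  rw [cells, sum_biUnion]
  · simp
  · intro j _ k _ hjk
    simp only [Function.onFun, disjoint_left, mem_product, mem_singleton]
    rintro c ⟨-, rfl⟩ ⟨-, h⟩
    exact hjk h

lemma sum_cells_apply_snd {R : Type*} [AddCommMonoid R] (M : Multiset ℕ) (g : ℕ → R) :
    ∑ c ∈ cells M, g c.2 = (M.map fun p => ∑ j ∈ Icc 1 p, g j).sum := by
  rw [sum_cells, ← sum_conjCount_smul (M := M) fun p hp => Multiset.le_sum_of_mem hp]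
  simp

lemma card_cells (M : Multiset ℕ) : (cells M).card = M.sum := by
  rw [card_eq_sum_ones, sum_cells_apply_snd M fun _ => 1]
  simp

lemma oddParts_eq_sum_map (M : Multiset ℕ) : oddParts M = (M.map (· % 2)).sum := by
  induction M using Multiset.induction with
  | empty => simp [oddParts]
  | cons a M ih =>
    rw [Multiset.map_cons, Multiset.sum_cons, ← ih, oddParts, Multiset.filter_cons,
      Multiset.card_add, oddParts]
    split_ifs with h
    · simp [Nat.odd_iff.mp h, add_comm]
    · simp [Nat.not_odd_iff.mp h]

lemma oddParts_eq_sum_cells (M : Multiset ℕ) :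
    (oddParts M : ℤ) = ∑ c ∈ cells M, (-1 : ℤ) ^ (c.2 + 1) := by
  rw [sum_cells_apply_snd M fun j => (-1 : ℤ) ^ (j + 1), oddParts_eq_sum_map]
  simp [sum_Icc_neg_one_pow_succ]

lemma oddConjParts_eq_sum_cells (M : Multiset ℕ) :
    (oddConjParts M : ℤ) = ∑ c ∈ cells M, (-1 : ℤ) ^ (c.1 + 1) := by
  rw [sum_cells]
  simp only [sum_Icc_neg_one_pow_succ, oddConjParts, card_filter, Nat.cast_sum]
  refine sum_congr rfl fun j _ => ?_
  split_ifs with h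
  · simp [Nat.odd_iff.mp h]
  · simp [Nat.not_odd_iff.mp h]

lemma srank_eq_sum_cells (M : Multiset ℕ) :
    srank M = ∑ c ∈ cells M, ((-1 : ℤ) ^ (c.2 + 1) - (-1) ^ (c.1 + 1)) := by
  rw [srank, oddParts_eq_sum_cells, oddConjParts_eq_sum_cells, sum_sub_distrib]

lemma neg_one_pow_succ_sub_modEq (i j : ℕ) :
    (-1 : ℤ) ^ (j + 1) - (-1) ^ (i + 1) ≡ 2 * ((j : ℤ) - i) [ZMOD 4] := by
  rw [Int.modEq_iff_dvd, neg_one_pow_eq_ite, neg_one_pow_eq_ite]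
  split_ifs with hj hi hi <;> rw [Nat.even_iff] at hj hi <;> omega

def content (c : ℕ × ℕ) : ℤ := c.2 - c.1

lemma srank_modEq_two_mul_sum_content (M : Multiset ℕ) :
    srank M ≡ 2 * ∑ c ∈ cells M, content c [ZMOD 4] := by
  rw [srank_eq_sum_cells, mul_sum]
  exact Int.ModEq.sum fun c _ => neg_one_pow_succ_sub_modEq c.1 c.2

lemma conjCount_antitone (M : Multiset ℕ) : Antitone (conjCount M) := fun _ _ h =>
  Multiset.card_le_card (Multiset.monotone_filter_right M fun _ hp => h.trans hp)

lemma CellMem.of_le {M : Multiset ℕ} {a b a' b' : ℕ} (h : CellMem M a b) (ha' : 1 ≤ a')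
    (hb' : 1 ≤ b') (ha : a' ≤ a) (hb : b' ≤ b) : CellMem M a' b' :=
  ⟨ha', hb', ha.trans (h.2.2.trans (conjCount_antitone M hb))⟩

lemma exists_eq_of_reflTransGen {α : Type*} {r : α → α → Prop} {f : α → ℤ}
    (hr : ∀ u v, r u v → f v ≤ f u + 1) {c d : α} (hcd : Relation.ReflTransGen r c d)
    {m : ℤ} (hcm : f c ≤ m) (hmd : m ≤ f d) : ∃ e, Relation.ReflTransGen r c e ∧ f e = m := by
  induction hcd with
  | refl => exact ⟨c, .refl, le_antisymm hcm hmd⟩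
  | @tail u v hcu huv ih =>
    by_cases hmu : m ≤ f u
    · exact ih hmu
    · exact ⟨v, hcu.tail huv, le_antisymm (hr u v huv |>.trans (by omega)) hmd⟩

lemma content_le_add_one_of_adj {u v : ℕ × ℕ} (h : Adj u v) : content v ≤ content u + 1 := by
  simp only [content]
  rcases h with ⟨_, _ | _⟩ | ⟨_, _ | _⟩ <;> omega

lemma image_content_eq_Icc {S : Finset (ℕ × ℕ)} {top : ℕ × ℕ} (htop : top ∈ S)
    (hmax : ∀ c ∈ S, content c ≤ content top)
    (hconn : ∀ c ∈ S, Relation.ReflTransGen (fun u v => u ∈ S ∧ v ∈ S ∧ Adj u v) c top)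
    (hinj : Set.InjOn content S) :
    S.image content = Icc (content top - #S + 1) (content top) := by
  have hne : (S.image content).Nonempty := ⟨_, mem_image_of_mem _ htop⟩
  obtain ⟨c₀, hc₀, hm⟩ := mem_image.mp ((S.image content).min'_mem hne)
  have hIcc : S.image content = Icc (content c₀) (content top) := by
    apply Subset.antisymm
    · intro k hk
      obtain ⟨c, hc, rfl⟩ := mem_image.mp hk
      exact mem_Icc.mpr ⟨hm ▸ (S.image content).min'_le _ hk, hmax c hc⟩
    · intro k hk
      obtain ⟨e, hc₀e, rfl⟩ := exists_eq_of_reflTransGen (f := content)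
        (fun u v huv => content_le_add_one_of_adj huv.2.2) (hconn c₀ hc₀)
        (mem_Icc.mp hk).1 (mem_Icc.mp hk).2
      have he : e ∈ S := by
        rcases hc₀e.cases_tail with rfl | ⟨_, _, hstep⟩
        exacts [hc₀, hstep.2.1]
      exact mem_image_of_mem _ he
  have hcard := congrArg Finset.card hIcc
  rw [card_image_of_injOn hinj, Int.card_Icc] at hcard
  rw [hIcc]
  congr 1
  have := hmax c₀ hc₀
  omega

lemma two_mul_sum_Icc_sub_add_one (a : ℤ) (ℓ : ℕ) :
    2 * ∑ d ∈ Icc (a - ℓ + 1) a, d = 2 * ℓ * a - ℓ ^ 2 + ℓ := by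
  induction ℓ with
  | zero => simp
  | succ k ih =>
    have hIcc : Icc (a - (k + 1 : ℕ) + 1) a = insert (a - k) (Icc (a - k + 1) a) := by
      ext d; simp only [mem_insert, mem_Icc]; push_cast; omega
    rw [hIcc, sum_insert (by simp), mul_add, ih]
    push_cast
    ring

section Strip

variable {Mb Ms : Multiset ℕ}

lemma Strip.of_le_of_le {c d e : ℕ × ℕ} (hc : Strip Mb Ms c) (hd : Strip Mb Ms d)
    (hce : c ≤ e) (hed : e ≤ d) : Strip Mb Ms e := by
  have h1 : 1 ≤ e.1 := hc.1.1.trans hce.1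
  have h2 : 1 ≤ e.2 := hc.1.2.1.trans hce.2
  exact ⟨hd.1.of_le h1 h2 hed.1 hed.2, fun he => hc.2 (he.of_le hc.1.1 hc.1.2.1 hce.1 hce.2)⟩

lemma content_injOn_strip
    (hno2x2 : ¬ ∃ a b : ℕ, Strip Mb Ms (a, b) ∧ Strip Mb Ms (a + 1, b) ∧
      Strip Mb Ms (a, b + 1) ∧ Strip Mb Ms (a + 1, b + 1)) :
    Set.InjOn content {c | Strip Mb Ms c} := by
  have row_le : ∀ c d : ℕ × ℕ, Strip Mb Ms c → Strip Mb Ms d → content c = content d →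
      d.1 ≤ c.1 := by
    intro c d hc hd hcd
    by_contra! hlt
    simp only [content] at hcd
    have between : ∀ e : ℕ × ℕ, c ≤ e → e.1 ≤ c.1 + 1 → e.2 ≤ c.2 + 1 → Strip Mb Ms e :=
      fun e hce h1 h2 => hc.of_le_of_le hd hce ⟨by omega, by omega⟩
    refine hno2x2 ⟨c.1, c.2, hc, ?_, ?_, ?_⟩ <;>
      exact between _ ⟨by simp, by simp⟩ (by simp) (by simp)
  intro c hc d hd hcd
  have h₁ := row_le c d hc hd hcd
  have h₂ := row_le d c hd hc hcd.symm
  simp only [content] at hcd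
  exact Prod.ext (by omega) (by omega)

lemma content_le_of_strip {x y : ℕ} (hhead : Strip Mb Ms (x, y))
    (hmaxcol : ∀ c : ℕ × ℕ, Strip Mb Ms c → c.2 ≤ y)
    (hminrow : ∀ c : ℕ × ℕ, Strip Mb Ms c → c.2 = y → x ≤ c.1)
    {c : ℕ × ℕ} (hc : Strip Mb Ms c) : content c ≤ content (x, y) := by
  have hcy := hmaxcol c hc
  have hcx : x ≤ c.1 := by
    by_contra! hlt
    exact (hminrow (c.1, y) (hc.of_le_of_le hhead ⟨le_rfl, hcy⟩ ⟨hlt.le, le_rfl⟩) rfl).not_gt hlt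
  simp only [content]
  omega

lemma two_mul_sum_content_sdiff_cells {x y : ℕ}
    (hconn : ∀ c d : ℕ × ℕ, Strip Mb Ms c → Strip Mb Ms d →
      Relation.ReflTransGen (fun u v => Strip Mb Ms u ∧ Strip Mb Ms v ∧ Adj u v) c d)
    (hno2x2 : ¬ ∃ a b : ℕ, Strip Mb Ms (a, b) ∧ Strip Mb Ms (a + 1, b) ∧
      Strip Mb Ms (a, b + 1) ∧ Strip Mb Ms (a + 1, b + 1))
    (hhead : Strip Mb Ms (x, y))
    (hmaxcol : ∀ c : ℕ × ℕ, Strip Mb Ms c → c.2 ≤ y)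
    (hminrow : ∀ c : ℕ × ℕ, Strip Mb Ms c → c.2 = y → x ≤ c.1) :
    2 * ∑ c ∈ cells Mb \ cells Ms, content c = 2 * #(cells Mb \ cells Ms) * content (x, y)
      - #(cells Mb \ cells Ms) ^ 2 + #(cells Mb \ cells Ms) := by
  set S := cells Mb \ cells Ms
  have hS (c : ℕ × ℕ) : c ∈ S ↔ Strip Mb Ms c := by
    simp only [S, mem_sdiff, mem_cells, Strip]
  have hinj : Set.InjOn content S := (content_injOn_strip hno2x2).mono fun c hc => (hS c).1 hc
  have himage : S.image content = Icc (content (x, y) - #S + 1) (content (x, y)) := by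
    refine image_content_eq_Icc ((hS _).2 hhead)
      (fun c hc => content_le_of_strip hhead hmaxcol hminrow ((hS c).1 hc)) (fun c hc => ?_) hinj
    refine Relation.ReflTransGen.mono (fun u v huv => ?_) _ _ (hconn c _ ((hS c).1 hc) hhead)
    exact ⟨(hS u).2 huv.1, (hS v).2 huv.2.1, huv.2.2⟩
  rw [← two_mul_sum_Icc_sub_add_one, ← himage, sum_image hinj]

end Strip

theorem srank_add_border_strip_general (n ℓ : ℕ) (π : Nat.Partition n)
    (πss : Nat.Partition (n + ℓ)) (x y : ℕ)
    (hsub : ∀ a b : ℕ, CellMem π.parts a b → CellMem πss.parts a b)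
    (hconn : ∀ c d : ℕ × ℕ, Strip πss.parts π.parts c → Strip πss.parts π.parts d →
      Relation.ReflTransGen
        (fun u v => Strip πss.parts π.parts u ∧ Strip πss.parts π.parts v ∧ Adj u v) c d)
    (hno2x2 : ¬ ∃ a b : ℕ, Strip πss.parts π.parts (a, b) ∧
      Strip πss.parts π.parts (a + 1, b) ∧ Strip πss.parts π.parts (a, b + 1) ∧
      Strip πss.parts π.parts (a + 1, b + 1))
    (hhead : Strip πss.parts π.parts (x, y))
    (hmaxcol : ∀ c : ℕ × ℕ, Strip πss.parts π.parts c → c.2 ≤ y)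
    (hminrow : ∀ c : ℕ × ℕ, Strip πss.parts π.parts c → c.2 = y → x ≤ c.1) :
    srank πss.parts ≡
      srank π.parts + 2 * (ℓ : ℤ) * ((x : ℤ) + (y : ℤ)) + (ℓ : ℤ) ^ 2 - (ℓ : ℤ) [ZMOD 4] := by
  have hcells : cells π.parts ⊆ cells πss.parts := fun c hc =>
    mem_cells.2 (hsub _ _ (mem_cells.1 hc))
  have hcard : #(cells πss.parts \ cells π.parts) = ℓ := by
    rw [card_sdiff_of_subset hcells, card_cells, card_cells, πss.parts_sum, π.parts_sum]
    omega
  have hsum : 2 * ∑ c ∈ cells πss.parts, content c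
      = 2 * ∑ c ∈ cells π.parts, content c + (2 * ℓ * content (x, y) - ℓ ^ 2 + ℓ) := by
    rw [← sum_sdiff hcells, mul_add, two_mul_sum_content_sdiff_cells hconn hno2x2 hhead hmaxcol
      hminrow, hcard]
    ring
  obtain ⟨k, hk⟩ := Int.even_mul_succ_self ((ℓ : ℤ) - 1)
  calc srank πss.parts ≡ 2 * ∑ c ∈ cells πss.parts, content c [ZMOD 4] :=
        srank_modEq_two_mul_sum_content _
    _ = 2 * ∑ c ∈ cells π.parts, content c + (2 * ℓ * content (x, y) - ℓ ^ 2 + ℓ) := hsum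
    _ ≡ srank π.parts + (2 * ℓ * content (x, y) - ℓ ^ 2 + ℓ) [ZMOD 4] :=
        (srank_modEq_two_mul_sum_content _).symm.add_right _
    _ ≡ srank π.parts + 2 * ℓ * (x + y) + ℓ ^ 2 - ℓ [ZMOD 4] :=
        Int.modEq_iff_dvd.mpr ⟨ℓ * x + k, by simp only [content]; linear_combination 2 * hk⟩

/-- Attaching a border strip of length `ℓ` (an edgewise connected skew shape of `ℓ` cells
containing no 2×2 square) whose head (its extreme North-East cell, the cell with the largest
column index) is in row `x`, column `y`, changes the srank by `2ℓ(x+y) + ℓ² - ℓ` mod `4`. -/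
theorem srank_add_border_strip (n ℓ : ℕ) (hl : 1 ≤ ℓ) (π : Nat.Partition n)
    (πss : Nat.Partition (n + ℓ)) (x y : ℕ)
    (hsub : ∀ a b : ℕ, CellMem π.parts a b → CellMem πss.parts a b)
    (hconn : ∀ c d : ℕ × ℕ, Strip πss.parts π.parts c → Strip πss.parts π.parts d →
      Relation.ReflTransGen
        (fun u v => Strip πss.parts π.parts u ∧ Strip πss.parts π.parts v ∧ Adj u v) c d)
    (hno2x2 : ¬ ∃ a b : ℕ, Strip πss.parts π.parts (a, b) ∧
      Strip πss.parts π.parts (a + 1, b) ∧ Strip πss.parts π.parts (a, b + 1) ∧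
      Strip πss.parts π.parts (a + 1, b + 1))
    (hhead : Strip πss.parts π.parts (x, y))
    (hmaxcol : ∀ c : ℕ × ℕ, Strip πss.parts π.parts c → c.2 ≤ y)
    (hminrow : ∀ c : ℕ × ℕ, Strip πss.parts π.parts c → c.2 = y → x ≤ c.1) :
    srank πss.parts ≡
      srank π.parts + 2 * (ℓ : ℤ) * ((x : ℤ) + (y : ℤ)) + (ℓ : ℤ) ^ 2 - (ℓ : ℤ) [ZMOD 4] :=
  srank_add_border_strip_general n ℓ π πss x y hsub hconn hno2x2 hhead hmaxcol hminrow

end BGG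

end
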